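/- arXiv:math/9911008 — 2 statements merged into one kernel-verified Lean document; each statement's English description precedes it below -/
import Mathlib

section
/- Let A be a unital C*-algebra with faithful state φ, let x ∈ A with x₀ = x - φ(x)·1 ≠ 0, choose ε with 0 < ε < ‖x₀‖₂/3, and let y ∈ A satisfy ‖x₀ - y‖ < ε. Suppose v is a unitary in A with φ(v*y*vy) = 0 and φ(y*v*v y)=φ(y*y) (i.e. ‖vy‖₂ = ‖y‖₂). Then ‖vx₀ - x₀v‖ > 0; in particular x₀ does not commute with v. -/
/-- If `x₀ = x - φ(x)·1 ≠ 0`, `0 < ε < ‖x₀‖₂/3`, `‖x₀ - y‖ < ε`, and `v` is a unitary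
with `vy ⊥ yv` and `‖vy‖₂ = ‖y‖₂`, then `‖vx₀ - x₀v‖ > 0`; in particular `x₀` does not
commute with `v`. -/
theorem stmt4 {A : Type*} [NormedRing A] [StarRing A] [CStarRing A]
    [NormedAlgebra ℂ A] [StarModule ℂ A] [CompleteSpace A]
    (φ : A →ₗ[ℂ] ℂ)
    (hφ1 : φ 1 = 1)
    (hpos : ∀ a : A, 0 ≤ (φ (star a * a)).re ∧ (φ (star a * a)).im = 0)
    (hstar : ∀ a : A, φ (star a) = starRingEnd ℂ (φ a))
    (hfaith : ∀ a : A, φ (star a * a) = 0 → a = 0)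
    (x : A) (x₀ : A) (hx₀ : x₀ = x - φ x • 1) (hx₀ne : x₀ ≠ 0)
    (ε : ℝ) (hε : 0 < ε)
    (hεlt : ε < Real.sqrt (φ (star x₀ * x₀)).re / 3)
    (y : A) (hy : ‖x₀ - y‖ < ε)
    (v : A) (hv : v ∈ unitary A)
    (horth : φ (star (y * v) * (v * y)) = 0)
    (hiso : φ (star (v * y) * (v * y)) = φ (star y * y)) :
    0 < ‖v * x₀ - x₀ * v‖ ∧ v * x₀ ≠ x₀ * v := by
  haveI : Nontrivial A := nontrivial_of_ne x₀ 0 hx₀ne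
  set N : A → ℝ := fun a => Real.sqrt (φ (star a * a)).re with hN
  have hre : ∀ a : A, 0 ≤ (φ (star a * a)).re := fun a => (hpos a).1
  have hN0 : ∀ a : A, 0 ≤ N a := fun a => Real.sqrt_nonneg _
  have hNsq : ∀ a : A, N a ^ 2 = (φ (star a * a)).re := fun a => Real.sq_sqrt (hre a)
  -- boundedness: N a ≤ ‖a‖
  have hB : ∀ a : A, N a ≤ ‖a‖ := by
    letI : CStarAlgebra A := ⟨⟩
    letI : PartialOrder A := CStarAlgebra.spectralOrder A
    letI : StarOrderedRing A := CStarAlgebra.spectralOrderedRing A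
    intro a
    have hle : star a * a ≤ algebraMap ℝ A (‖a‖ ^ 2) :=
      CStarAlgebra.star_mul_le_algebraMap_norm_sq
    set b : A := algebraMap ℝ A (‖a‖ ^ 2) - star a * a with hb
    have hbpos : 0 ≤ b := sub_nonneg.mpr hle
    have hs : star (CFC.sqrt b) * CFC.sqrt b = b := by
      rw [(IsSelfAdjoint.of_nonneg (CFC.sqrt_nonneg b)).star_eq, CFC.sqrt_mul_sqrt_self b hbpos]
    have h1 : 0 ≤ (φ b).re := by have := (hpos (CFC.sqrt b)).1; rwa [hs] at this
    have hφb : φ b = ((‖a‖ ^ 2 : ℝ) : ℂ) - φ (star a * a) := by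
      rw [hb, map_sub, IsScalarTower.algebraMap_apply ℝ ℂ A,
        Algebra.algebraMap_eq_smul_one, map_smul, hφ1]
      simp
    rw [hφb] at h1
    simp only [Complex.sub_re, Complex.ofReal_re] at h1
    have : (φ (star a * a)).re ≤ ‖a‖ ^ 2 := by linarith
    calc N a = Real.sqrt (φ (star a * a)).re := rfl
      _ ≤ Real.sqrt (‖a‖ ^ 2) := Real.sqrt_le_sqrt this
      _ = ‖a‖ := by rw [Real.sqrt_sq (norm_nonneg a)]
  -- inner product core
  letI core : PreInnerProductSpace.Core ℂ A :=
    { inner := fun a b => φ (star a * b)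
      conj_inner_symm := by
        intro a b
        have h := hstar (star b * a)
        rw [star_mul, star_star] at h
        exact h.symm ▸ rfl
      re_inner_nonneg := by intro a; simpa using (hpos a).1
      add_left := by intro a b c; simp [star_add, add_mul]
      smul_left := by intro a b r; simp [star_smul, smul_mul_assoc] }
  -- Cauchy-Schwarz: ‖φ (star a * b)‖ ≤ N a * N b
  have hCS : ∀ a b : A, ‖φ (star a * b)‖ ≤ N a * N b := by
    intro a b
    have h : ‖φ (star a * b)‖ * ‖φ (star b * a)‖
        ≤ RCLike.re (φ (star a * a)) * RCLike.re (φ (star b * b)) :=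
      InnerProductSpace.Core.inner_mul_inner_self_le (𝕜 := ℂ) (F := A) a b
    have hsymm : ‖φ (star b * a)‖ = ‖φ (star a * b)‖ := by
      have hc := hstar (star b * a)
      rw [star_mul, star_star] at hc
      rw [hc, RCLike.norm_conj]
    rw [hsymm] at h
    have h' : ‖φ (star a * b)‖ ^ 2 ≤ (N a * N b) ^ 2 := by
      rw [mul_pow, hNsq, hNsq]
      simpa [sq, RCLike.re_to_complex] using h
    exact (pow_le_pow_iff_left₀ (norm_nonneg _) (mul_nonneg (hN0 a) (hN0 b)) two_ne_zero).mp h'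
  have hReCS : ∀ a b : A, (φ (star a * b)).re ≤ N a * N b := fun a b =>
    (Complex.re_le_norm _).trans (hCS a b)
  -- triangle: N x₀ ≤ N y + N (x₀ - y)
  set d : A := x₀ - y with hd
  have hxd : x₀ = y + d := by rw [hd]; abel
  have hTri : N x₀ ≤ N y + N d := by
    have hexp : φ (star x₀ * x₀)
        = φ (star y * y) + φ (star y * d) + φ (star d * y) + φ (star d * d) := by
      rw [hxd]
      rw [show star (y + d) * (y + d)
          = star y * y + star y * d + star d * y + star d * d by
        simp only [star_add, add_mul, mul_add]; abel]
      simp [map_add]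
    have hsy : (φ (star d * y)).re = (φ (star y * d)).re := by
      have hc := hstar (star y * d)
      rw [star_mul, star_star] at hc
      rw [hc, Complex.conj_re]
    have h1 : (φ (star x₀ * x₀)).re ≤ (N y + N d) ^ 2 := by
      have := hReCS y d
      rw [hexp]
      simp only [Complex.add_re]
      rw [hsy]
      have hny : (φ (star y * y)).re = N y ^ 2 := (hNsq y).symm
      have hnd : (φ (star d * d)).re = N d ^ 2 := (hNsq d).symm
      nlinarith [hN0 y, hN0 d]
    calc N x₀ = Real.sqrt (φ (star x₀ * x₀)).re := rfl
      _ ≤ Real.sqrt ((N y + N d) ^ 2) := Real.sqrt_le_sqrt h1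
      _ = N y + N d := Real.sqrt_sq (by positivity)
  have hNd : N d < ε := lt_of_le_of_lt (hB d) hy
  have h3ε : 3 * ε < N x₀ := by
    have : ε < N x₀ / 3 := hεlt
    linarith
  have hyN : 2 * ε < N y := by linarith
  -- the contradiction
  have hne : v * x₀ ≠ x₀ * v := by
    intro hc
    set w : A := v * y - y * v with hw
    have hy' : y = x₀ - d := by rw [hd]; abel
    have hwd : w = d * v - v * d := by
      rw [hw, hy', mul_sub, sub_mul, hc]; abel
    have hv1 : ‖v‖ = 1 := CStarRing.norm_of_mem_unitary hv
    have hwn : ‖w‖ < 2 * ε := by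
      calc ‖w‖ ≤ ‖d * v‖ + ‖v * d‖ := by rw [hwd]; exact norm_sub_le _ _
        _ ≤ ‖d‖ * ‖v‖ + ‖v‖ * ‖d‖ := add_le_add (norm_mul_le _ _) (norm_mul_le _ _)
        _ = 2 * ‖d‖ := by rw [hv1]; ring
        _ < 2 * ε := by linarith
    have hexp2 : star w * w = star (v * y) * (v * y) - star (v * y) * (y * v)
        - star (y * v) * (v * y) + star (y * v) * (y * v) := by
      rw [hw]
      simp only [star_sub, sub_mul, mul_sub]
      abel
    have cross2 : φ (star (v * y) * (y * v)) = 0 := by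
      have hc2 := hstar (star (y * v) * (v * y))
      rw [star_mul, star_star] at hc2
      rw [hc2, horth, map_zero]
    have hφw : φ (star w * w) = φ (star y * y) + φ (star (y * v) * (y * v)) := by
      rw [hexp2, map_add, map_sub, map_sub, hiso, cross2, horth]
      ring
    have hrew : (φ (star y * y)).re ≤ (φ (star w * w)).re := by
      rw [hφw, Complex.add_re]
      have := (hpos (y * v)).1
      linarith
    have hNyw : N y ≤ N w := Real.sqrt_le_sqrt hrew
    have := hB w
    linarith
  refine ⟨?_, hne⟩
  rw [norm_pos_iff]
  exact sub_ne_zero.mpr hne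
end

section
/- Let (Ω, μ) be a probability measure on ℝ whose support is not a single point (i.e., μ is the distribution of a self-adjoint element x ∉ ℂ·1). If additionally μ has no atoms, then the von Neumann-style functional calculus algebra C(supp μ) with the state f ↦ ∫ f dμ contains a unitary v (a continuous function of modulus 1 on supp μ) with ∫ v dμ = 0. -/
open MeasureTheory

open ProbabilityTheory Set Filter Real Complex in
/-- If `μ` is an atomless Borel probability measure on `ℝ` supported on the interval
`[a,b]` with `a < b` and of full support there, then there exists a continuous function
`v` of modulus `1` on `[a,b]` (a unitary of `C(supp μ)`) with `∫ v dμ = 0`. -/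
theorem stmt8 (μ : Measure ℝ) [IsProbabilityMeasure μ] [NullSingletonClass μ]
    (a b : ℝ) (hab : a < b)
    (hsupp : μ (Set.Icc a b)ᶜ = 0)
    (hfull : ∀ s : Set ℝ, IsOpen s → (s ∩ Set.Icc a b).Nonempty → 0 < μ s) :
    ∃ v : ℝ → ℂ, ContinuousOn v (Set.Icc a b)
      ∧ (∀ t ∈ Set.Icc a b, ‖v t‖ = 1)
      ∧ ∫ t, v t ∂μ = 0 := by
  set F : ℝ → ℝ := fun t => cdf μ t with hF
  have hFmono : Monotone F := monotone_cdf μ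
  -- continuity of the cdf of an atomless measure
  have hFc : Continuous F := by
    rw [continuous_iff_continuousAt]
    intro x
    rw [hFmono.continuousAt_iff_leftLim_eq_rightLim]
    have hright : Function.rightLim F x = F x :=
      hFmono.continuousWithinAt_Ioi_iff_rightLim_eq.1
        (((cdf μ).right_continuous x).mono Set.Ioi_subset_Ici_self)
    have hsing : (cdf μ).measure {x} = ENNReal.ofReal (F x - Function.leftLim F x) :=
      StieltjesFunction.measure_singleton _ x
    rw [measure_cdf μ, measure_singleton] at hsing
    have h1 : F x - Function.leftLim F x ≤ 0 := by
      have h := hsing.symm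
      rwa [ENNReal.ofReal_eq_zero] at h
    have h2 : Function.leftLim F x ≤ F x := hFmono.leftLim_le le_rfl
    have : Function.leftLim F x = F x := le_antisymm h2 (by linarith)
    rw [this, hright]
  have hFnonneg : ∀ t, 0 ≤ F t := cdf_nonneg μ
  have hFle1 : ∀ t, F t ≤ 1 := cdf_le_one μ
  have hIic : ∀ t, ENNReal.ofReal (F t) = μ (Set.Iic t) := ofReal_cdf μ
  -- F b = 1
  have hμIicb : μ (Set.Iic b) = 1 := by
    have h1 : μ (Set.Ioi b) = 0 := by
      refine measure_mono_null ?_ hsupp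
      intro t ht
      simp only [Set.mem_compl_iff, Set.mem_Icc, Set.mem_Ioi] at *
      intro h; linarith [h.2]
    have := measure_add_measure_compl (measurableSet_Iic (a := b)) (μ := μ)
    rw [Set.compl_Iic, h1, add_zero, measure_univ] at this
    exact this
  have hFb : F b = 1 := by
    have := hIic b
    rw [hμIicb] at this
    have h0 := hFnonneg b
    rw [← ENNReal.ofReal_one] at this
    exact ENNReal.ofReal_eq_ofReal_iff h0 (by norm_num) |>.1 this
  -- F a = 0
  have hFa : F a = 0 := by
    have h1 : μ (Set.Iic a) = 0 := by
      have h2 : μ (Set.Iio a) = 0 := by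
        refine measure_mono_null ?_ hsupp
        intro t ht
        simp only [Set.mem_compl_iff, Set.mem_Icc, Set.mem_Iio] at *
        intro h; linarith
      have : Set.Iic a = Set.Iio a ∪ {a} := by
        ext t; simp [le_iff_lt_or_eq]
      rw [this]
      refine le_antisymm ?_ zero_le
      calc μ (Set.Iio a ∪ {a}) ≤ μ (Set.Iio a) + μ {a} := measure_union_le _ _
        _ = 0 := by rw [h2, measure_singleton, add_zero]
    have := hIic a
    rw [h1, ENNReal.ofReal_eq_zero] at this
    exact le_antisymm this (hFnonneg a)
  -- the pushforward of μ under F is Lebesgue on [0,1]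
  have hmap : μ.map F = volume.restrict (Set.Icc (0:ℝ) 1) := by
    refine Measure.ext_of_Iic _ _ (fun y => ?_)
    rw [Measure.map_apply hFc.measurable measurableSet_Iic,
      Measure.restrict_apply measurableSet_Iic]
    rcases lt_or_ge y 0 with hy | hy
    · have h1 : F ⁻¹' Set.Iic y = ∅ := by
        ext t; simp only [Set.mem_preimage, Set.mem_Iic, Set.mem_empty_iff_false, iff_false]
        intro h; linarith [hFnonneg t]
      have h2 : Set.Iic y ∩ Set.Icc (0:ℝ) 1 = ∅ := by
        ext t; simp only [Set.mem_inter_iff, Set.mem_Iic, Set.mem_Icc,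
          Set.mem_empty_iff_false, iff_false]
        rintro ⟨h3, h4, -⟩; linarith
      rw [h1, h2]
      simp
    rcases le_or_gt 1 y with hy1 | hy1
    · have h1 : F ⁻¹' Set.Iic y = Set.univ := by
        ext t; simp only [Set.mem_preimage, Set.mem_Iic, Set.mem_univ, iff_true]
        linarith [hFle1 t]
      have h2 : Set.Iic y ∩ Set.Icc (0:ℝ) 1 = Set.Icc (0:ℝ) 1 := by
        refine Set.inter_eq_self_of_subset_right ?_
        intro t ht; exact le_trans ht.2 hy1
      rw [h1, h2, measure_univ, Real.volume_Icc]
      norm_num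
    · -- 0 ≤ y < 1
      set S : Set ℝ := {t | F t ≤ y} with hS
      have hSa : a ∈ S := by simp [hS, hFa, hy]
      have hSb : S ⊆ Set.Iic b := by
        intro t ht
        simp only [Set.mem_Iic]
        by_contra h
        push_neg at h
        have h5 : F b ≤ F t := hFmono h.le
        rw [hFb] at h5
        have h6 : F t ≤ y := ht
        linarith
      have hSbdd : BddAbove S := ⟨b, hSb⟩
      have hSclosed : IsClosed S := isClosed_le hFc continuous_const
      set c : ℝ := sSup S with hc
      have hcS : c ∈ S := hSclosed.csSup_mem ⟨a, hSa⟩ hSbdd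
      have hFcy : F c = y := by
        refine le_antisymm hcS ?_
        by_contra h
        push_neg at h
        have hev : ∀ᶠ t in nhds c, F t < y := (hFc.continuousAt (x := c)).eventually_lt_const h
        have hev' : ∀ᶠ t in nhdsWithin c (Set.Ioi c), F t < y :=
          hev.filter_mono nhdsWithin_le_nhds
        obtain ⟨t, htF, htc⟩ := (hev'.and eventually_mem_nhdsWithin).exists
        have hle : t ≤ c := le_csSup hSbdd (show t ∈ S from htF.le)
        exact absurd hle (not_le.2 htc)
      have hSIic : S = Set.Iic c := by
        ext t
        constructor
        · intro ht; exact le_csSup hSbdd ht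
        · intro ht; exact le_trans (hFmono ht) hcS
      have hpre : F ⁻¹' Set.Iic y = Set.Iic c := by
        rw [← hSIic]; rfl
      have h2 : Set.Iic y ∩ Set.Icc (0:ℝ) 1 = Set.Icc 0 y := by
        ext t
        simp only [Set.mem_inter_iff, Set.mem_Iic, Set.mem_Icc]
        constructor
        · rintro ⟨h3, h4, h5⟩; exact ⟨h4, h3⟩
        · rintro ⟨h3, h4⟩; exact ⟨h4, h3, le_trans h4 hy1.le⟩
      rw [hpre, h2, ← hIic c, hFcy, Real.volume_Icc, sub_zero]
  -- define v
  refine ⟨fun t => Complex.exp (2 * π * Complex.I * F t), ?_, ?_, ?_⟩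
  · exact (Complex.continuous_exp.comp (by continuity)).continuousOn
  · intro t ht
    rw [Complex.norm_exp]
    simp
  · have hg : AEStronglyMeasurable (fun s : ℝ => Complex.exp (2 * π * Complex.I * s)) (μ.map F) :=
      (Complex.continuous_exp.comp (by continuity)).aestronglyMeasurable
    rw [← integral_map hFc.measurable.aemeasurable hg, hmap]
    have h1 : ∫ s in Set.Icc (0:ℝ) 1, Complex.exp (2 * π * Complex.I * s)
        = ∫ s in (0:ℝ)..1, Complex.exp (2 * π * Complex.I * s) := by
      rw [intervalIntegral.integral_of_le (by norm_num : (0:ℝ) ≤ 1),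
        MeasureTheory.integral_Icc_eq_integral_Ioc]
    rw [h1, integral_exp_mul_complex (by
      simp [Complex.ext_iff, Real.pi_ne_zero])]
    simp [Complex.exp_two_pi_mul_I]
end
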